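/- Let V be a finite set and A = {A_1,…,A_k} a Sperner family of subsets of V with ⋃_{i=1}^k A_i = V and |A_i| > 1 for all i, and let τ(A) = {T_1,…,T_m} be the set of minimal transversals of A. Let G_A be the graph with vertex set V ∪ {t_1,…,t_m} whose edges are all pairs of distinct vertices of V together with, for each i, the edges joining t_i to exactly the vertices of T_i. Then the set of minimal total dominating sets of G_A is exactly A. -/

import Mathlib

open scoped Classical

section GraphDefs

variable {V : Type} (G : SimpleGraph V)

/-- A leaf is a vertex of degree 1. -/
def IsLeafVx (v : V) : Prop := (G.neighborSet v).ncard = 1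

/-- The height of a vertex: the minimum distance to a leaf in its connected
component (`0` if there is no leaf reachable from it, e.g. for isolated vertices). -/
noncomputable def heightVx (v : V) : ℕ :=
  sInf {n | ∃ l, IsLeafVx G l ∧ G.Reachable v l ∧ G.dist v l = n}

/-- The height of a graph: the maximum height of a vertex. -/
noncomputable def heightGr : ℕ := sSup (Set.range (heightVx G))

/-- A graph is balanced if no two adjacent vertices have the same height. -/
def IsBalanced : Prop := ∀ u w, G.Adj u w → heightVx G u ≠ heightVx G w

/-- The open neighborhood of a set of vertices. -/
def nbhd (S : Set V) : Set V := {u | ∃ v ∈ S, G.Adj v u}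

/-- A total dominating set: `N(S) = V`. -/
def IsTDSet (S : Set V) : Prop := nbhd G S = Set.univ

/-- A minimal total dominating set. -/
def IsMinTDSet (S : Set V) : Prop := IsTDSet G S ∧ ∀ S' ⊂ S, ¬ IsTDSet G S'

/-- A graph is TD-unmixed if all of its minimal total dominating sets have
the same cardinality. -/
def TDUnmixed : Prop :=
  ∀ S₁ S₂ : Set V, IsMinTDSet G S₁ → IsMinTDSet G S₂ → S₁.ncard = S₂.ncard

/-- A forest is TD-unmixed if every connected component is TD-unmixed. -/
def ComponentwiseTDUnmixed : Prop :=
  ∀ c : G.ConnectedComponent, TDUnmixed (G.induce c.supp)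

end GraphDefs

section TransversalDefs

variable {V : Type}

/-- A Sperner family: no member contains another. -/
def IsSperner (𝒜 : Set (Set V)) : Prop := ∀ A ∈ 𝒜, ∀ B ∈ 𝒜, A ⊆ B → A = B

/-- A transversal of a family of sets: a set meeting every member. -/
def IsTransversal (𝒜 : Set (Set V)) (T : Set V) : Prop := ∀ A ∈ 𝒜, (T ∩ A).Nonempty

/-- A minimal transversal. -/
def IsMinTransversal (𝒜 : Set (Set V)) (T : Set V) : Prop :=
  IsTransversal 𝒜 T ∧ ∀ T' ⊂ T, ¬ IsTransversal 𝒜 T'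

/-- The graph `G_𝒜` of Construction 6.4 (Bahadır–Ekim–Gözüpek): vertices are the
elements of `V` together with one new vertex `t_T` for each minimal transversal `T` of
`𝒜`; all pairs of distinct vertices of `V` are adjacent, and each `t_T` is adjacent to
exactly the vertices of `T`. -/
def GA (𝒜 : Set (Set V)) :
    SimpleGraph (V ⊕ {T : Set V // IsMinTransversal 𝒜 T}) where
  Adj a b :=
    match a, b with
    | Sum.inl u, Sum.inl v => u ≠ v
    | Sum.inl u, Sum.inr t => u ∈ t.1
    | Sum.inr t, Sum.inl u => u ∈ t.1
    | Sum.inr _, Sum.inr _ => False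
  symm := by
    constructor
    rintro (u | t) (v | s) h
    · exact h.symm
    · exact h
    · exact h
    · exact h.elim
  loopless := by
    constructor
    rintro (u | t) h
    · exact h rfl
    · exact h

end TransversalDefs

/-!
A total dominating set of `G_𝒜` must dominate every transversal vertex `t_T`, whose
neighbours all lie in `V`; so its trace `B` on `V` meets every minimal transversal. By the
duality between a family and its minimal transversals, `B` then contains a member `A` of `𝒜`
(otherwise `Bᶜ` would be a transversal, containing a minimal one that misses `B`). Conversely
each `A ∈ 𝒜` is a total dominating set: it dominates `V` because `|A| > 1` and `V` is a
clique, and it dominates each `t_T` because `T` meets `A`. Minimality of `A` is the Sperner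
property: for `A' ⊂ A`, no member of `𝒜` lies inside `A'`, so some minimal transversal avoids
`A'` and its vertex `t_T` is not dominated.
-/

section Transversals

variable {V : Type} {𝒜 : Set (Set V)}

theorem isMinTransversal_iff_minimal {T : Set V} :
    IsMinTransversal 𝒜 T ↔ Minimal (IsTransversal 𝒜) T :=
  Set.minimal_iff_forall_ssubset.symm

theorem IsTransversal.exists_isMinTransversal_subset [Finite V] {T : Set V}
    (hT : IsTransversal 𝒜 T) : ∃ T' ⊆ T, IsMinTransversal 𝒜 T' := by
  simpa only [isMinTransversal_iff_minimal] using exists_minimal_le_of_wellFoundedLT _ T hT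

theorem isTransversal_compl_iff {B : Set V} : IsTransversal 𝒜 Bᶜ ↔ ∀ A ∈ 𝒜, ¬ A ⊆ B := by
  simp only [IsTransversal, Set.inter_comm, Set.inter_compl_nonempty_iff]

theorem exists_mem_subset_of_forall_isMinTransversal [Finite V] {B : Set V}
    (hB : ∀ T, IsMinTransversal 𝒜 T → (B ∩ T).Nonempty) : ∃ A ∈ 𝒜, A ⊆ B := by
  by_contra! h
  obtain ⟨T, hTB, hT⟩ := (isTransversal_compl_iff.2 h).exists_isMinTransversal_subset
  obtain ⟨x, hxB, hxT⟩ := hB T hT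
  exact hTB hxT hxB

theorem IsSperner.exists_isMinTransversal_disjoint_of_ssubset [Finite V] (hsp : IsSperner 𝒜)
    {A A' : Set V} (hA : A ∈ 𝒜) (hA' : A' ⊂ A) :
    ∃ T, IsMinTransversal 𝒜 T ∧ Disjoint A' T := by
  have hcompl : IsTransversal 𝒜 A'ᶜ := isTransversal_compl_iff.2 fun B hB hBA' =>
    hA'.not_subset (hsp B hB A hA (hBA'.trans hA'.subset) ▸ hBA')
  obtain ⟨T, hTA', hT⟩ := hcompl.exists_isMinTransversal_subset
  exact ⟨T, hT, Set.subset_compl_iff_disjoint_left.1 hTA'⟩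

end Transversals

theorem IsMinTDSet.eq_of_subset {V : Type} {G : SimpleGraph V} {S T : Set V}
    (hS : IsMinTDSet G S) (hT : IsTDSet G T) (hTS : T ⊆ S) : T = S := by
  by_contra hne
  exact hS.2 T (hTS.ssubset_of_ne hne) hT

section GA

variable {V : Type} {𝒜 : Set (Set V)}

theorem inr_mem_nbhd_GA_iff {S : Set (V ⊕ {T : Set V // IsMinTransversal 𝒜 T})}
    {t : {T : Set V // IsMinTransversal 𝒜 T}} :
    Sum.inr t ∈ nbhd (GA 𝒜) S ↔ (Sum.inl ⁻¹' S ∩ t.1).Nonempty := by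
  constructor
  · rintro ⟨u | s, hu, hadj⟩
    · exact ⟨u, hu, hadj⟩
    · exact hadj.elim
  · rintro ⟨u, hu, hut⟩
    exact ⟨Sum.inl u, hu, hut⟩

theorem isTDSet_GA_image {A : Set V} (hA : A ∈ 𝒜) (hcard : 1 < A.ncard) :
    IsTDSet (GA 𝒜) (Sum.inl '' A) := by
  refine Set.eq_univ_of_forall fun x => ?_
  rcases x with v | t
  · obtain ⟨a, ha, hav⟩ := Set.exists_ne_of_one_lt_ncard hcard v
    exact ⟨Sum.inl a, Set.mem_image_of_mem _ ha, hav⟩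
  · rw [inr_mem_nbhd_GA_iff, Set.preimage_image_eq _ Sum.inl_injective, Set.inter_comm]
    exact t.2.1 A hA

theorem not_isTDSet_GA_image_of_ssubset [Finite V] (hsp : IsSperner 𝒜) {A A' : Set V}
    (hA : A ∈ 𝒜) (hA' : A' ⊂ A) : ¬ IsTDSet (GA 𝒜) (Sum.inl '' A') := by
  intro hTD
  obtain ⟨T, hT, hdisj⟩ := hsp.exists_isMinTransversal_disjoint_of_ssubset hA hA'
  have hdom := inr_mem_nbhd_GA_iff.1 (Set.eq_univ_iff_forall.1 hTD (Sum.inr ⟨T, hT⟩))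
  rw [Set.preimage_image_eq _ Sum.inl_injective] at hdom
  obtain ⟨a, haA', haT⟩ := hdom
  exact Set.disjoint_left.1 hdisj haA' haT

end GA

theorem minTDSets_of_GA_general {V : Type} [Fintype V] (𝒜 : Set (Set V)) (hsp : IsSperner 𝒜)
    (hbig : ∀ A ∈ 𝒜, 1 < A.ncard) :
    {S : Set (V ⊕ {T : Set V // IsMinTransversal 𝒜 T}) | IsMinTDSet (GA 𝒜) S}
      = (fun A => Sum.inl '' A) '' 𝒜 := by
  ext S
  constructor
  · intro hS
    obtain ⟨A, hA, hAS⟩ := exists_mem_subset_of_forall_isMinTransversal fun T hT =>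
      inr_mem_nbhd_GA_iff.1 (Set.eq_univ_iff_forall.1 hS.1 (Sum.inr ⟨T, hT⟩))
    exact ⟨A, hA, hS.eq_of_subset (isTDSet_GA_image hA (hbig A hA)) (Set.image_subset_iff.2 hAS)⟩
  · rintro ⟨A, hA, rfl⟩
    refine ⟨isTDSet_GA_image hA (hbig A hA), fun S' hS' => ?_⟩
    obtain ⟨A', hA'A, rfl⟩ := Set.subset_image_iff.1 hS'.subset
    exact not_isTDSet_GA_image_of_ssubset hsp hA ⟨hA'A, fun h => hS'.2 (Set.image_mono h)⟩

/-- **Construction** (Bahadır–Ekim–Gözüpek): for a Sperner family `𝒜` of subsets of a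
finite set `V` covering `V`, all of whose members have more than one element, the set of
minimal total dominating sets of `G_𝒜` is exactly `𝒜`. -/
theorem minTDSets_of_GA {V : Type} [Fintype V] (𝒜 : Set (Set V)) (hsp : IsSperner 𝒜)
    (hcov : ⋃₀ 𝒜 = Set.univ) (hbig : ∀ A ∈ 𝒜, 1 < A.ncard) :
    {S : Set (V ⊕ {T : Set V // IsMinTransversal 𝒜 T}) | IsMinTDSet (GA 𝒜) S}
      = (fun A => Sum.inl '' A) '' 𝒜 :=
  minTDSets_of_GA_general 𝒜 hsp hbig
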